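/- Let P be a measurable subset of Cantor space, τ a finite binary string, and δ > 0 with d(τ,P) ≥ δ. Then there exists an infinite binary sequence X extending τ such that for every finite σ with τ ⪯ σ ≺ X, the density d(σ,P) ≥ δ/2. -/

import Mathlib

open MeasureTheory ENNReal

/-! ### Cantor space and the uniform (coin-flipping) measure -/

/-- The binary digits of a real number in `[0,1)`, giving a point of Cantor space. -/
noncomputable def binaryDigits (x : ℝ) : ℕ → Bool :=
  fun n => decide (⌊x * 2 ^ (n + 1)⌋ % 2 = 1)

/-- The uniform (Lebesgue / coin-flipping) measure on Cantor space `2^ω`,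
obtained as the pushforward of Lebesgue measure on `[0,1)` under binary expansion. -/
noncomputable def μCantor : Measure (ℕ → Bool) :=
  Measure.map binaryDigits (volume.restrict (Set.Ico (0 : ℝ) 1))

/-- `σ` is an initial segment of the infinite sequence `X`. -/
def IsPrefixOf (σ : List Bool) (X : ℕ → Bool) : Prop :=
  ∀ i : Fin σ.length, X i = σ.get i

/-- The cylinder determined by a finite binary string. -/
def cylinder (σ : List Bool) : Set (ℕ → Bool) := {X | IsPrefixOf σ X}

/-- The open set generated by a set of finite binary strings. -/
def openOf (S : Set (List Bool)) : Set (ℕ → Bool) := ⋃ σ ∈ S, cylinder σ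

/-- The density of a set `P` above the string `τ`: `μ([τ] ∩ P) · 2^{|τ|}`. -/
noncomputable def dens (τ : List Bool) (P : Set (ℕ → Bool)) : ℝ≥0∞ :=
  μCantor (cylinder τ ∩ P) * 2 ^ τ.length

/-- The length-`n` initial segment of `X`, as a finite binary string. -/
def strPrefix (X : ℕ → Bool) (n : ℕ) : List Bool := (List.range n).map X

/-- A set of strings is prefix-free if no element is a proper prefix of another. -/
def PrefixFreeSet (S : Set (List Bool)) : Prop :=
  ∀ σ ∈ S, ∀ τ ∈ S, σ <+: τ → σ = τ

/-- The weight `∑_{σ ∈ S} 2^{-|σ|}` of a set of strings. -/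
noncomputable def weight (S : Set (List Bool)) : ℝ≥0∞ :=
  ∑' σ : S, 2⁻¹ ^ (σ : List Bool).length

/-- A set of strings is bounded if its weight is finite. -/
def BoundedStr (S : Set (List Bool)) : Prop := weight S < ⊤

/-- The tail `X(·+k)` of an infinite binary sequence. -/
def tailSeq (X : ℕ → Bool) (k : ℕ) : ℕ → Bool := fun n => X (n + k)

/-! ### Oracle computability -/

/-- The `e`-th computably enumerable set of naturals (the domain of the `e`-th
partial computable function). -/
def WEnum (e n : ℕ) : Prop := ((Denumerable.ofNat Nat.Partrec.Code e).eval n).Dom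

/-- `OracleComputes e X n m` holds if the `e`-th Turing functional with oracle `X`
outputs `m` on input `n`; a Turing functional is presented by the c.e. set `W_e`
of coded axioms `(σ, n, m)`, and `Γ_e^X(n) = m` iff some initial segment `σ` of `X`
has `(σ, n, m) ∈ W_e`. -/
def OracleComputes (e : ℕ) (X : ℕ → Bool) (n m : ℕ) : Prop :=
  ∃ σ : List Bool, IsPrefixOf σ X ∧
    WEnum e (Nat.pair (Encodable.encode σ) (Nat.pair n m))

def natOfBool (b : Bool) : ℕ := cond b 1 0

/-- `f : ℕ → ℕ` is computable with oracle `A`: some Turing functional with oracle `A`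
has graph exactly `f`. -/
def FnComputableIn (f : ℕ → ℕ) (A : ℕ → Bool) : Prop :=
  ∃ e, ∀ n m, OracleComputes e A n m ↔ m = f n

/-- Turing reducibility `B ≤_T A` for subsets of `ω` (as elements of Cantor space). -/
def TuringLE (B A : ℕ → Bool) : Prop := FnComputableIn (fun n => natOfBool (B n)) A

/-- Turing equivalence. -/
def TuringEquiv (A B : ℕ → Bool) : Prop := TuringLE A B ∧ TuringLE B A

/-- The Turing join `A ⊕ B`. -/
def joinSet (A B : ℕ → Bool) : ℕ → Bool :=
  fun n => if n % 2 = 0 then A (n / 2) else B (n / 2)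

open Classical in
/-- The Turing jump `A′ = {e : Γ_e^A(e)↓}`. -/
noncomputable def jump (A : ℕ → Bool) : ℕ → Bool :=
  fun e => decide (∃ m, OracleComputes e A e m)

/-- The empty oracle. -/
def emptyOracle : ℕ → Bool := fun _ => false

/-- The halting problem `∅′`. -/
noncomputable def zeroJump : ℕ → Bool := jump emptyOracle

/-- A set is computable iff it is Turing reducible to the empty oracle. -/
def ComputableSet (A : ℕ → Bool) : Prop := TuringLE A emptyOracle

/-- A set of naturals is c.e. in `A`. -/
def CeIn (A : ℕ → Bool) (S : Set ℕ) : Prop :=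
  ∃ e, ∀ n, n ∈ S ↔ ∃ m, OracleComputes e A n m

/-- A set of strings is c.e. in `A`. -/
def CeStrIn (A : ℕ → Bool) (S : Set (List Bool)) : Prop :=
  ∃ e, ∀ σ : List Bool, σ ∈ S ↔ ∃ m, OracleComputes e A (Encodable.encode σ) m

/-- A c.e. set of strings. -/
def CeStr (S : Set (List Bool)) : Prop := CeStrIn emptyOracle S

/-! ### Π⁰₁ classes, Martin-Löf randomness, K-triviality -/

/-- A `Π⁰₁(A)` class: the complement of the union of cylinders over an `A`-c.e.
set of strings. -/
def Pi01In (A : ℕ → Bool) (P : Set (ℕ → Bool)) : Prop :=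
  ∃ S : Set (List Bool), CeStrIn A S ∧ P = (openOf S)ᶜ

/-- A `Π⁰₁` class. -/
def Pi01 (P : Set (ℕ → Bool)) : Prop := Pi01In emptyOracle P

/-- The `n`-th level of the `e`-th `A`-effective sequence of open sets. -/
def testLevel (e : ℕ) (A : ℕ → Bool) (n : ℕ) : Set (ℕ → Bool) :=
  openOf {σ | ∃ m, OracleComputes e A (Nat.pair n (Encodable.encode σ)) m}

/-- A Martin-Löf test relative to `A`: a uniformly `A`-c.e. sequence of open sets
`G n` with `μ(G n) ≤ 2^{-n}`. -/
def MLTestIn (A : ℕ → Bool) (G : ℕ → Set (ℕ → Bool)) : Prop :=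
  (∃ e, ∀ n, G n = testLevel e A n) ∧ ∀ n, μCantor (G n) ≤ 2⁻¹ ^ n

/-- `X` is Martin-Löf random relative to `A`: it passes every `A`-Martin-Löf test. -/
def MLRandomIn (A X : ℕ → Bool) : Prop :=
  ∀ G : ℕ → Set (ℕ → Bool), MLTestIn A G → ∃ n, X ∉ G n

/-- `X` is Martin-Löf random. -/
def MLRandom (X : ℕ → Bool) : Prop := MLRandomIn emptyOracle X

/-- The domain of the `e`-th machine, viewed as a set of binary strings. -/
def machineDom (e : ℕ) : Set (List Bool) :=
  {σ | ((Denumerable.ofNat Nat.Partrec.Code e).eval (Encodable.encode σ)).Dom}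

/-- The `e`-th machine is prefix-free. -/
def PrefixFreeMachine (e : ℕ) : Prop := PrefixFreeSet (machineDom e)

/-- Prefix-free Kolmogorov complexity (defined, up to an additive constant, as the
least `|σ| + 2e + 2` over prefix-free machines `e` and programs `σ` producing `x`). -/
noncomputable def Kcpx (x : ℕ) : ℕ :=
  sInf {k | ∃ e, ∃ σ : List Bool, PrefixFreeMachine e ∧
    x ∈ (Denumerable.ofNat Nat.Partrec.Code e).eval (Encodable.encode σ) ∧
    k = σ.length + 2 * e + 2}

/-- `K(n)` means `K(1^n)`. -/
noncomputable def KofNat (n : ℕ) : ℕ := Kcpx (Encodable.encode (List.replicate n true))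

/-- `A` is K-trivial: `K(A↾n) ≤ K(n) + c` for some constant `c`. -/
def KTrivial (A : ℕ → Bool) : Prop :=
  ∃ c, ∀ n, Kcpx (Encodable.encode (strPrefix A n)) ≤ KofNat n + c

/-!
Every string `σ` has a one-bit extension whose density in `P` is at least that of `σ`,
since the densities of `σ ++ [false]` and `σ ++ [true]` average to that of `σ`.
Following such extensions greedily from `τ` gives a path `X` along which the density never
drops below `d(τ, P) ≥ δ`, let alone below `δ / 2`.
-/

lemma isPrefixOf_iff (σ : List Bool) (X : ℕ → Bool) :
    IsPrefixOf σ X ↔ ∀ i (h : i < σ.length), X i = σ[i] :=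
  ⟨fun h i hi => h ⟨i, hi⟩, fun h i => h i i.isLt⟩

lemma IsPrefixOf.eq_of_length_eq {σ ρ : List Bool} {X : ℕ → Bool} (hσ : IsPrefixOf σ X)
    (hρ : IsPrefixOf ρ X) (hl : σ.length = ρ.length) : σ = ρ := by
  rw [isPrefixOf_iff] at hσ hρ
  exact List.ext_getElem hl fun i hi₁ hi₂ => (hσ i hi₁).symm.trans (hρ i hi₂)

lemma isPrefixOf_append_singleton (σ : List Bool) (b : Bool) (X : ℕ → Bool) :
    IsPrefixOf (σ ++ [b]) X ↔ IsPrefixOf σ X ∧ X σ.length = b := by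
  simp only [isPrefixOf_iff, List.length_append, List.length_singleton]
  constructor
  · intro h
    refine ⟨fun i hi => ?_, by simpa using h σ.length (by omega)⟩
    rw [h i (by omega), List.getElem_append_left hi]
  · rintro ⟨hσ, hb⟩ i hi
    rcases Nat.lt_or_ge i σ.length with hlt | hge
    · rw [List.getElem_append_left hlt, hσ i hlt]
    · obtain rfl : i = σ.length := by omega
      simpa using hb

lemma cylinder_append_singleton (σ : List Bool) (b : Bool) :
    _root_.cylinder (σ ++ [b]) = _root_.cylinder σ ∩ {X | X σ.length = b} := by
  ext X
  exact isPrefixOf_append_singleton σ b X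

lemma measurableSet_cylinder (σ : List Bool) : MeasurableSet (_root_.cylinder σ) := by
  have : _root_.cylinder σ = ⋂ i : Fin σ.length, (fun X : ℕ → Bool => X i) ⁻¹' {σ.get i} := by
    ext X
    simp [_root_.cylinder, IsPrefixOf]
  rw [this]
  exact .iInter fun i => measurable_pi_apply (i : ℕ) (measurableSet_singleton _)

lemma measure_cylinder_append_false_inter_add {μ : Measure (ℕ → Bool)} (σ : List Bool)
    (P : Set (ℕ → Bool)) :
    μ (_root_.cylinder (σ ++ [false]) ∩ P) + μ (_root_.cylinder (σ ++ [true]) ∩ P) =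
      μ (_root_.cylinder σ ∩ P) := by
  have h_true : _root_.cylinder σ ∩ P ∩ _root_.cylinder (σ ++ [true]) =
      _root_.cylinder (σ ++ [true]) ∩ P := by
    rw [cylinder_append_singleton]
    tauto_set
  have h_false : (_root_.cylinder σ ∩ P) \ _root_.cylinder (σ ++ [true]) =
      _root_.cylinder (σ ++ [false]) ∩ P := by
    ext X
    simp only [cylinder_append_singleton, Set.mem_inter_iff, Set.mem_sdiff, Set.mem_ofPred_eq,
      Bool.eq_false_iff, ne_eq]
    tauto
  rw [← measure_inter_add_sdiff (_root_.cylinder σ ∩ P) (measurableSet_cylinder (σ ++ [true])),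
    h_true, h_false, add_comm]

lemma dens_append_false_add_dens_append_true (σ : List Bool) (P : Set (ℕ → Bool)) :
    dens (σ ++ [false]) P + dens (σ ++ [true]) P = 2 * dens σ P := by
  simp only [dens, List.length_append, List.length_singleton, pow_succ, ← mul_assoc,
    ← add_mul, measure_cylinder_append_false_inter_add]
  ring

lemma exists_dens_le_dens_append (σ : List Bool) (P : Set (ℕ → Bool)) :
    ∃ b : Bool, dens σ P ≤ dens (σ ++ [b]) P := by
  by_contra! h
  have hlt := ENNReal.add_lt_add (h false) (h true)
  rw [dens_append_false_add_dens_append_true, two_mul] at hlt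
  exact hlt.false

section Path

variable (τ : List Bool) (b : List Bool → Bool)

def growPath : ℕ → List Bool
  | 0 => τ
  | n + 1 => growPath n ++ [b (growPath n)]

-- `growPath τ b (n + 1)` has length greater than `n`, so the default `false` is never used.
def growPathLimit (n : ℕ) : Bool := (growPath τ b (n + 1)).getD n false

lemma length_growPath (n : ℕ) : (growPath τ b n).length = τ.length + n := by
  induction n with
  | zero => rfl
  | succ n ih => simp [growPath, ih, Nat.add_assoc]

lemma growPath_prefix_of_le {m n : ℕ} (h : m ≤ n) : growPath τ b m <+: growPath τ b n := by
  induction n, h using Nat.le_induction with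
  | base => exact List.prefix_refl _
  | succ n _ ih => exact ih.trans (List.prefix_append _ _)

lemma isPrefixOf_growPath_growPathLimit (n : ℕ) :
    IsPrefixOf (growPath τ b n) (growPathLimit τ b) := by
  rw [isPrefixOf_iff]
  intro i hi
  have hi' : i < (growPath τ b (i + 1)).length := by rw [length_growPath]; omega
  rw [growPathLimit, List.getD_eq_getElem _ _ hi']
  rcases Nat.le_total (i + 1) n with h | h
  · exact (growPath_prefix_of_le τ b h).getElem hi'
  · exact ((growPath_prefix_of_le τ b h).getElem hi).symm

lemma eq_growPath_of_isPrefixOf_growPathLimit {σ : List Bool} (hτσ : τ <+: σ)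
    (hσ : IsPrefixOf σ (growPathLimit τ b)) :
    σ = growPath τ b (σ.length - τ.length) :=
  hσ.eq_of_length_eq (isPrefixOf_growPath_growPathLimit τ b _) <| by
    rw [length_growPath]
    have := hτσ.length_le
    omega

end Path

theorem exists_path_of_forall_exists_append {Q : List Bool → Prop}
    (hQ : ∀ σ, Q σ → ∃ b : Bool, Q (σ ++ [b])) {τ : List Bool} (hτ : Q τ) :
    ∃ X : ℕ → Bool, IsPrefixOf τ X ∧ ∀ σ, τ <+: σ → IsPrefixOf σ X → Q σ := by
  have hstep : ∀ σ, ∃ b : Bool, Q σ → Q (σ ++ [b]) := fun σ => by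
    by_cases hσ : Q σ
    · exact (hQ σ hσ).imp fun _ h _ => h
    · exact ⟨false, fun h => absurd h hσ⟩
  choose b hb using hstep
  have hpath : ∀ n, Q (growPath τ b n) := by
    intro n
    induction n with
    | zero => exact hτ
    | succ n ih => exact hb _ ih
  refine ⟨growPathLimit τ b, isPrefixOf_growPath_growPathLimit τ b 0, fun σ hτσ hσ => ?_⟩
  rw [eq_growPath_of_isPrefixOf_growPathLimit τ b hτσ hσ]
  exact hpath _

theorem stmt1_general (P : Set (ℕ → Bool)) (τ : List Bool)
    (δ : ℝ≥0∞) (hd : δ ≤ dens τ P) :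
    ∃ X : ℕ → Bool, IsPrefixOf τ X ∧
      ∀ σ : List Bool, τ <+: σ → IsPrefixOf σ X → δ / 2 ≤ dens σ P := by
  obtain ⟨X, hτX, hX⟩ := exists_path_of_forall_exists_append (Q := fun σ => δ ≤ dens σ P)
    (fun σ hσ => (exists_dens_le_dens_append σ P).imp fun _ => hσ.trans) hd
  exact ⟨X, hτX, fun σ hτσ hσX => ENNReal.half_le_self.trans (hX σ hτσ hσX)⟩

/-- if `d(τ,P) ≥ δ > 0`, then there is an `X ⊇ τ` all of whose
initial segments extending `τ` have density at least `δ/2` in `P`. -/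
theorem stmt1 (P : Set (ℕ → Bool)) (hP : MeasurableSet P) (τ : List Bool)
    (δ : ℝ≥0∞) (hδ : 0 < δ) (hd : δ ≤ dens τ P) :
    ∃ X : ℕ → Bool, IsPrefixOf τ X ∧
      ∀ σ : List Bool, τ <+: σ → IsPrefixOf σ X → δ / 2 ≤ dens σ P :=
  stmt1_general P τ δ hd
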